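/- arXiv:1911.05043 — 3 statements merged into one kernel-verified Lean document; each statement's English description precedes it below -/
import Mathlib

section
/- In the cut unit disk W = {z ∈ ℂ : |z| < 1} \ ((0,1) × {0}), the two points 1/2 + εi and 1/2 − εi (for small ε > 0) cannot be joined by a path in W that stays within distance 1/4 of 1/2; equivalently, any path in W from 1/2 + εi to 1/2 − εi must leave the ball B(1/2, 1/4). -/
open Complex

theorem stmt_11 (ε : ℝ) (hε : 0 < ε) (hε' : ε < 1 / 4)
    (W : Set ℂ)
    (hW : W = {z : ℂ | ‖z‖ < 1} \ {z : ℂ | 0 < z.re ∧ z.re < 1 ∧ z.im = 0})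
    (γ : ℝ → ℂ) (hγ : ContinuousOn γ (Set.Icc 0 1))
    (hγW : ∀ t ∈ Set.Icc (0 : ℝ) 1, γ t ∈ W)
    (h0 : γ 0 = 1 / 2 + ε * I) (h1 : γ 1 = 1 / 2 - ε * I) :
    ∃ t ∈ Set.Icc (0 : ℝ) 1, (1 : ℝ) / 4 ≤ ‖γ t - 1 / 2‖ := by
  by_contra hcon
  push_neg at hcon
  -- Imaginary part is continuous, positive at 0, negative at 1
  have hf : ContinuousOn (fun t => (γ t).im) (Set.Icc (0:ℝ) 1) :=
    Complex.continuous_im.comp_continuousOn hγ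
  have hf0 : (γ 0).im = ε := by simp [h0]
  have hf1 : (γ 1).im = -ε := by simp [h1]
  have h01 : (0:ℝ) ≤ 1 := by norm_num
  have hIVT := intermediate_value_Icc' h01 hf
  have hmem : (0:ℝ) ∈ Set.Icc ((γ 1).im) ((γ 0).im) := by
    rw [hf0, hf1]; constructor <;> linarith
  obtain ⟨t, ht, hti⟩ := hIVT hmem
  have hγt := hγW t ht
  rw [hW] at hγt
  have hdist := hcon t ht
  have hre : |(γ t - 1/2).re| ≤ ‖γ t - 1/2‖ := Complex.abs_re_le_norm _
  have hre' : (γ t - 1/2).re = (γ t).re - 1/2 := by simp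
  rw [hre'] at hre
  have : |(γ t).re - 1/2| < 1/4 := lt_of_le_of_lt hre hdist
  have h1 : (γ t).re > 0 := by
    rcases abs_lt.mp this with ⟨a, b⟩; linarith
  have h2 : (γ t).re < 1 := by
    rcases abs_lt.mp this with ⟨a, b⟩; linarith
  exact hγt.2 ⟨h1, h2, hti⟩
end

section
/- The comb region W, obtained from the open unit square (0,1)×(0,1) by removing for each n ≥ 1 the segment {1/n} × (0, 1 − 1/n], is open and connected. -/
open Set

private lemma comb_mem {a t : ℝ} (ha : a ∈ Set.Ioo (0:ℝ) 1) (ht : t ∈ Set.Ioo (0:ℝ) 1)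
    (h : ∀ m : ℕ, 1 ≤ m → a = 1 / m → 1 - 1 / m < t) :
    (a, t) ∈ (Set.Ioo (0:ℝ) 1 ×ˢ Set.Ioo (0:ℝ) 1) \
      ⋃ n : ℕ, ⋃ _ : 1 ≤ n, ({(1 / n : ℝ)} ×ˢ Set.Ioc (0:ℝ) (1 - 1 / n)) := by
  refine ⟨⟨ha, ht⟩, ?_⟩
  simp only [Set.mem_iUnion, Set.mem_prod, Set.mem_singleton_iff, Set.mem_Ioc, not_exists]
  rintro m hm ⟨h1, _, h3⟩
  exact absurd h3 (not_le.mpr (h m hm h1))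

private lemma twothirds_ne : ∀ m : ℕ, 1 ≤ m → (2/3 : ℝ) ≠ 1 / m := by
  intro m hm h
  rcases Nat.lt_or_ge m 2 with h2 | h2
  · interval_cases m
    norm_num at h
  · have : (2:ℝ) ≤ m := by exact_mod_cast h2
    have hpos : (0:ℝ) < m := by linarith
    have : (1:ℝ)/m ≤ 1/2 := by
      apply div_le_div_of_nonneg_left <;> linarith
    linarith

theorem stmt_12 (W : Set (ℝ × ℝ))
    (hW : W = (Set.Ioo (0 : ℝ) 1 ×ˢ Set.Ioo (0 : ℝ) 1) \
      ⋃ n : ℕ, ⋃ _ : 1 ≤ n, ({(1 / n : ℝ)} ×ˢ Set.Ioc (0 : ℝ) (1 - 1 / n))) :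
    IsOpen W ∧ IsConnected W := by
  subst hW
  -- key: extraction of the non-membership condition
  have hext : ∀ x y : ℝ, (x, y) ∈ (Set.Ioo (0:ℝ) 1 ×ˢ Set.Ioo (0:ℝ) 1) \
      ⋃ n : ℕ, ⋃ _ : 1 ≤ n, ({(1 / n : ℝ)} ×ˢ Set.Ioc (0:ℝ) (1 - 1 / n)) →
      ∀ m : ℕ, 1 ≤ m → x = 1 / m → 1 - 1 / m < y := by
    rintro x y ⟨⟨hx, hy⟩, hp⟩ m hm hxm
    by_contra hle
    push_neg at hle
    apply hp
    simp only [Set.mem_iUnion, Set.mem_prod, Set.mem_singleton_iff, Set.mem_Ioc]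
    exact ⟨m, hm, hxm, hy.1, hle⟩
  constructor
  · -- openness
    rw [isOpen_iff_forall_mem_open]
    rintro ⟨x, y⟩ hp
    obtain ⟨⟨hx, hy⟩, hpu⟩ := hp
    obtain ⟨N, hN⟩ := exists_nat_gt (2 / x)
    have hx0 : (0:ℝ) < x := hx.1
    -- closed set of nearby comb teeth
    set F : Set (ℝ × ℝ) := ⋃ m ∈ Finset.range N, ({(1 / m : ℝ)} ×ˢ Set.Icc (0:ℝ) (1 - 1 / m))
      with hF
    have hFclosed : IsClosed F := by
      apply Set.Finite.isClosed_biUnion (Finset.finite_toSet _)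
      intro m _
      exact isClosed_singleton.prod isClosed_Icc
    refine ⟨(Set.Ioo (0:ℝ) 1 ×ˢ Set.Ioo (0:ℝ) 1) ∩ Fᶜ ∩ {z : ℝ × ℝ | x / 2 < z.1}, ?_, ?_, ?_, ?_⟩
    · -- subset of W
      rintro ⟨a, b⟩ ⟨⟨hab, hFc⟩, hhalf⟩
      refine ⟨hab, ?_⟩
      simp only [Set.mem_iUnion, Set.mem_prod, Set.mem_singleton_iff, Set.mem_Ioc]
      rintro ⟨m, hm, h1, h2, h3⟩
      rcases Nat.lt_or_ge m N with hmN | hmN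
      · apply hFc
        simp only [hF, Set.mem_iUnion, Set.mem_prod, Set.mem_singleton_iff, Set.mem_Icc,
          Finset.mem_coe, Finset.mem_range]
        exact ⟨m, hmN, h1, le_of_lt h2, h3⟩
      · -- far teeth: 1/m < x/2
        have hm1 : (1:ℝ) ≤ m := by exact_mod_cast hm
        have hNm : (N:ℝ) ≤ m := by exact_mod_cast hmN
        have hNpos : (0:ℝ) < N := by
          have : (0:ℝ) < 2 / x := by positivity
          linarith
        have h1m : (1:ℝ)/m ≤ 1/N := by
          apply div_le_div_of_nonneg_left <;> linarith
        have h1N : (1:ℝ)/N < x/2 := by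
          rw [div_lt_div_iff₀ hNpos (by norm_num : (0:ℝ) < 2)]
          have h2N := mul_lt_mul_of_pos_right hN hx0
          rw [div_mul_cancel₀ _ (ne_of_gt hx0)] at h2N
          nlinarith
        have : a < x / 2 := by rw [h1] at *; linarith
        simp only [Set.mem_setOf_eq] at hhalf
        linarith
    · -- openness of the neighborhood
      apply IsOpen.inter
      apply IsOpen.inter
      · exact (isOpen_Ioo).prod isOpen_Ioo
      · exact hFclosed.isOpen_compl
      · exact isOpen_lt continuous_const continuous_fst
    · -- membership
      have hnF : (x, y) ∉ F := by
        simp only [hF, Set.mem_iUnion, Set.mem_prod, Set.mem_singleton_iff, Set.mem_Icc,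
          Finset.mem_coe, Finset.mem_range, not_exists]
        rintro m hmN ⟨h1, h2, h3⟩
        rcases Nat.eq_zero_or_pos m with rfl | hm1
        · norm_num at h1
          linarith [hx.1, h1]
        · have := hext x y ⟨⟨hx, hy⟩, hpu⟩ m hm1 h1
          linarith
      have hhalf : (x, y) ∈ {z : ℝ × ℝ | x / 2 < z.1} := by
        have : x / 2 < x := by linarith [hx.1]
        exact this
      have hsq : (x, y) ∈ Set.Ioo (0:ℝ) 1 ×ˢ Set.Ioo (0:ℝ) 1 := Set.mem_prod.mpr ⟨hx, hy⟩
      exact Set.mem_inter hsq hnF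
    · -- second membership component
      have : x / 2 < x := by linarith [hx.1]
      exact this
  · -- connectedness
    have hb : ((2/3 : ℝ), (2/3 : ℝ)) ∈ (Set.Ioo (0:ℝ) 1 ×ˢ Set.Ioo (0:ℝ) 1) \
        ⋃ n : ℕ, ⋃ _ : 1 ≤ n, ({(1 / n : ℝ)} ×ˢ Set.Ioc (0:ℝ) (1 - 1 / n)) := by
      apply comb_mem (by norm_num) (by norm_num)
      intro m hm h
      exact absurd h (twothirds_ne m hm)
    refine ⟨⟨_, hb⟩, ?_⟩
    apply isPreconnected_of_forall ((2/3 : ℝ), (2/3 : ℝ))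
    rintro ⟨x, y⟩ hp
    obtain ⟨⟨hx, hy⟩, hpu⟩ := hp
    have hcond := hext x y ⟨⟨hx, hy⟩, hpu⟩
    set c : ℝ := min x (2/3) with hc
    set d : ℝ := max x (2/3) with hd
    set h : ℝ := max y (1 - c/2) with hh
    have hc0 : 0 < c := lt_min hx.1 (by norm_num)
    have hc23 : c ≤ 2/3 := min_le_right _ _
    have hd1 : d < 1 := max_lt hx.2 (by norm_num)
    have hyh : y ≤ h := le_max_left _ _
    have h23h : (2/3 : ℝ) ≤ h := le_trans (by linarith) (le_max_right _ _)
    have hh1 : h < 1 := max_lt hy.2 (by linarith)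
    have hh0 : 0 < h := lt_of_lt_of_le hy.1 hyh
    refine ⟨({x} ×ˢ Set.Icc y h ∪ Set.Icc c d ×ˢ {h}) ∪ {(2/3:ℝ)} ×ˢ Set.Icc (2/3 : ℝ) h,
      ?_, ?_, ?_, ?_⟩
    · -- subset of W
      rintro ⟨a, b⟩ (hab | hab) 
      · rcases hab with ⟨ha, hb'⟩ | ⟨ha, hb'⟩
        · -- vertical segment at x
          simp only [Set.mem_singleton_iff] at ha
          subst ha
          simp only [Set.mem_Icc] at hb'
          apply comb_mem hx ⟨lt_of_lt_of_le hy.1 hb'.1, lt_of_le_of_lt hb'.2 hh1⟩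
          intro m hm hxm
          have := hcond m hm hxm
          linarith [hb'.1]
        · -- horizontal segment at height h
          simp only [Set.mem_singleton_iff] at hb'
          subst hb'
          simp only [Set.mem_Icc] at ha
          apply comb_mem ⟨lt_of_lt_of_le hc0 ha.1, lt_of_le_of_lt ha.2 hd1⟩ ⟨hh0, hh1⟩
          intro m hm ham
          have h1 : c ≤ 1/m := ham ▸ ha.1
          have : 1 - 1/(m:ℝ) ≤ 1 - c := by linarith
          have : 1 - c < 1 - c/2 := by linarith
          calc 1 - 1/(m:ℝ) ≤ 1 - c := by linarith
            _ < 1 - c/2 := by linarith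
            _ ≤ h := le_max_right _ _
      · -- vertical segment at 2/3
        rcases hab with ⟨ha, hb'⟩
        simp only [Set.mem_singleton_iff] at ha
        subst ha
        simp only [Set.mem_Icc] at hb'
        apply comb_mem (by norm_num) ⟨by linarith [hb'.1], lt_of_le_of_lt hb'.2 hh1⟩
        intro m hm ham
        exact absurd ham (twothirds_ne m hm)
    · -- contains base point
      right
      exact ⟨rfl, by simp [Set.mem_Icc]; exact h23h⟩
    · -- contains (x, y)
      left; left
      exact ⟨rfl, by simp [Set.mem_Icc]; exact hyh⟩
    · -- preconnected
      have hA : IsPreconnected ({x} ×ˢ Set.Icc y h : Set (ℝ × ℝ)) :=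
        isPreconnected_singleton.prod isPreconnected_Icc
      have hB : IsPreconnected (Set.Icc c d ×ˢ {h} : Set (ℝ × ℝ)) :=
        isPreconnected_Icc.prod isPreconnected_singleton
      have hC : IsPreconnected ({(2/3:ℝ)} ×ˢ Set.Icc (2/3:ℝ) h : Set (ℝ × ℝ)) :=
        isPreconnected_singleton.prod isPreconnected_Icc
      have hAB : IsPreconnected ({x} ×ˢ Set.Icc y h ∪ Set.Icc c d ×ˢ {h} : Set (ℝ × ℝ)) := by
        apply IsPreconnected.union (x, h)
        · exact ⟨rfl, Set.mem_Icc.mpr ⟨hyh, le_refl _⟩⟩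
        · exact ⟨Set.mem_Icc.mpr ⟨min_le_left _ _, le_max_left _ _⟩, rfl⟩
        · exact hA
        · exact hB
      apply IsPreconnected.union ((2/3:ℝ), h)
      · right
        exact ⟨Set.mem_Icc.mpr ⟨min_le_right _ _, le_max_right _ _⟩, rfl⟩
      · exact ⟨rfl, Set.mem_Icc.mpr ⟨h23h, le_refl _⟩⟩
      · exact hAB
      · exact hC
end

section
/- In the comb region W, for n ≥ 2 any continuous path in W from a point with x-coordinate in (1/(n+1), 1/n) to a point with x-coordinate greater than 1/n must pass through a point whose y-coordinate exceeds 1 − 1/n. -/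
theorem stmt_13 (W : Set (ℝ × ℝ))
    (hW : W = (Set.Ioo (0 : ℝ) 1 ×ˢ Set.Ioo (0 : ℝ) 1) \
      ⋃ m : ℕ, ⋃ _ : 1 ≤ m, ({(1 / m : ℝ)} ×ˢ Set.Ioc (0 : ℝ) (1 - 1 / m)))
    (n : ℕ) (hn : 2 ≤ n)
    (γ : ℝ → ℝ × ℝ) (hγ : ContinuousOn γ (Set.Icc 0 1))
    (hγW : ∀ t ∈ Set.Icc (0 : ℝ) 1, γ t ∈ W)
    (h0 : (γ 0).1 ∈ Set.Ioo (1 / (n + 1) : ℝ) (1 / n))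
    (h1 : (1 / n : ℝ) < (γ 1).1) :
    ∃ t ∈ Set.Icc (0 : ℝ) 1, 1 - 1 / (n : ℝ) < (γ t).2 := by
  have hf : ContinuousOn (fun t => (γ t).1) (Set.Icc (0 : ℝ) 1) :=
    continuous_fst.comp_continuousOn hγ
  have hsub := intermediate_value_Icc (by norm_num : (0 : ℝ) ≤ 1) hf
  have hmem : (1 / n : ℝ) ∈ Set.Icc ((γ 0).1) ((γ 1).1) :=
    ⟨le_of_lt h0.2, le_of_lt h1⟩
  obtain ⟨t, ht, hteq⟩ := hsub hmem
  refine ⟨t, ht, ?_⟩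
  have hW' := hγW t ht
  rw [hW] at hW'
  obtain ⟨⟨-, hy0, -⟩, hnot⟩ := hW'
  by_contra hle
  push_neg at hle
  exact hnot (Set.mem_iUnion.2 ⟨n, Set.mem_iUnion.2 ⟨by omega,
    ⟨hteq, hy0, hle⟩⟩⟩)
end
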